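/- arXiv:2203.02362 — 3 statements merged into one kernel-verified Lean document; each statement's English description precedes it below -/
import Mathlib

section
/- Let G be a finite group whose power graph is a cograph, and let x, w ∈ G be commuting elements with |x| = p and |w| = q for distinct primes p and q. Then every element of q-power order in the centralizer C_G(x) lies in the cyclic subgroup ⟨w⟩. -/
/-- The power graph of a group: `g` and `h` are adjacent iff they are distinct and
one is a power (integer power) of the other. -/
def powerGraph (G : Type*) [Group G] : SimpleGraph G where
  Adj g h := g ≠ h ∧ (h ∈ Subgroup.zpowers g ∨ g ∈ Subgroup.zpowers h)
  symm := ⟨fun g h ⟨hne, hor⟩ => ⟨hne.symm, hor.symm⟩⟩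
  loopless := ⟨fun g h => h.1 rfl⟩

/-- `a, b, c, d` induce a path on four vertices in `Γ`. -/
def InducedP4 {V : Type*} (Γ : SimpleGraph V) (a b c d : V) : Prop :=
  a ≠ c ∧ a ≠ d ∧ b ≠ d ∧ Γ.Adj a b ∧ Γ.Adj b c ∧ Γ.Adj c d ∧
    ¬Γ.Adj a c ∧ ¬Γ.Adj a d ∧ ¬Γ.Adj b d

/-- A graph is a cograph iff it has no induced `P4`. -/
def IsCograph {V : Type*} (Γ : SimpleGraph V) : Prop :=
  ∀ a b c d : V, ¬ InducedP4 Γ a b c d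

/-- The prime graph (Gruenberg–Kegel graph) of a group, as a graph on `ℕ`. -/
def primeGraph (G : Type*) [Group G] : SimpleGraph ℕ where
  Adj p q := p ≠ q ∧ p.Prime ∧ q.Prime ∧ ∃ g : G, orderOf g = p * q
  symm := ⟨fun p q ⟨hne, hp, hq, g, hg⟩ => ⟨hne.symm, hq, hp, g, by rwa [Nat.mul_comm]⟩⟩
  loopless := ⟨fun p h => h.1 rfl⟩

/-!
For commuting `a`, `b` of coprime orders both are powers of `a * b`, so `a — a * b — b` is a
path in the power graph, and any `c` with `b ∈ ⟨c⟩` that is unrelated to `a` and to `a * b`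
completes it to an induced `P4`. Taking `a = x`, `b ∈ ⟨y⟩` of order `q` and `c = y` shows
`|y| = q`. Taking `a = w`, `b = x` and `c = x * y` then shows `y ∈ ⟨w⟩`, because the elements
of order dividing `q` in the cyclic group `⟨x * y⟩` are exactly those of `⟨y⟩`.
-/

open Subgroup

section

variable {G : Type*} [Group G]

theorem Commute.left_mem_zpowers_mul {a b : G} (h : Commute a b)
    (hco : (orderOf a).Coprime (orderOf b)) : a ∈ zpowers (a * b) := by
  have hpow : (a * b) ^ orderOf b = a ^ orderOf b := by
    rw [h.mul_pow, pow_orderOf_eq_one, mul_one]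
  have ha : a ∈ zpowers (a ^ orderOf b) := mem_zpowers_pow_iff.mpr hco.symm
  exact zpowers_le.mpr (hpow ▸ npow_mem_zpowers _ _) ha

theorem Commute.right_mem_zpowers_mul {a b : G} (h : Commute a b)
    (hco : (orderOf a).Coprime (orderOf b)) : b ∈ zpowers (a * b) :=
  h.eq ▸ h.symm.left_mem_zpowers_mul hco.symm

theorem eq_one_of_mem_zpowers_of_coprime {a c : G} (ha : a ∈ zpowers c)
    (hco : (orderOf a).Coprime (orderOf c)) : a = 1 :=
  orderOf_eq_one_iff.mp (Nat.eq_one_of_dvd_coprimes hco dvd_rfl (orderOf_dvd_of_mem_zpowers ha))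

theorem Commute.mem_zpowers_of_mem_zpowers_mul {x z g : G} {n : ℕ} (hxz : Commute x z)
    (hx : (orderOf x).Coprime n) (hz : z ^ n = 1) (hg : g ∈ zpowers (x * z)) (hgn : g ^ n = 1) :
    g ∈ zpowers z := by
  obtain ⟨m, rfl⟩ := mem_zpowers_iff.mp hg
  have hzm : (z ^ m) ^ n = 1 := by
    rw [← zpow_natCast, ← zpow_mul, mul_comm, zpow_mul, zpow_natCast, hz, one_zpow]
  have hxm : (x ^ m) ^ n = 1 := by
    rwa [hxz.mul_zpow, (hxz.zpow_zpow m m).mul_pow, hzm, mul_one] at hgn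
  have hxm_one : x ^ m = 1 := eq_one_of_mem_zpowers_of_coprime (zpow_mem_zpowers x m)
    (Nat.Coprime.coprime_dvd_left (orderOf_dvd_of_pow_eq_one hxm) hx.symm)
  rw [hxz.mul_zpow, hxm_one, one_mul]
  exact zpow_mem_zpowers z m

theorem mem_zpowers_of_mem_zpowers_of_orderOf_eq {w y : G} (hy : orderOf y ≠ 0)
    (hwy : w ∈ zpowers y) (h : orderOf w = orderOf y) : y ∈ zpowers w := by
  have : Finite (zpowers y) := Nat.finite_of_card_ne_zero (by rwa [Nat.card_zpowers])
  rw [eq_of_le_of_card_ge (zpowers_le.mpr hwy) (by rw [Nat.card_zpowers, Nat.card_zpowers, h])]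
  exact mem_zpowers y

theorem inducedP4_powerGraph_mul {a b c : G} (hab : Commute a b)
    (hco : (orderOf a).Coprime (orderOf b)) (ha : a ≠ 1) (hb : b ≠ 1)
    (hbc : b ∈ zpowers c) (hbc' : b ≠ c) (hac : a ∉ zpowers c) (hca : c ∉ zpowers a)
    (habc : a * b ∉ zpowers c) (hcab : c ∉ zpowers (a * b)) :
    InducedP4 (powerGraph G) a (a * b) b c := by
  have hba : b ∉ zpowers a := fun h => hb (eq_one_of_mem_zpowers_of_coprime h hco.symm)
  have hab' : a ∉ zpowers b := fun h => ha (eq_one_of_mem_zpowers_of_coprime h hco)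
  refine ⟨fun h => hba (h ▸ mem_zpowers a), fun h => hac (h ▸ mem_zpowers a),
    fun h => habc (h ▸ mem_zpowers _), ⟨?_, .inr (hab.left_mem_zpowers_mul hco)⟩,
    ⟨?_, .inl (hab.right_mem_zpowers_mul hco)⟩, ⟨hbc', .inr hbc⟩,
    fun h => h.2.elim hba hab', fun h => h.2.elim hca hac, fun h => h.2.elim hcab habc⟩
  · exact fun h => hb (left_eq_mul.mp h)
  · exact fun h => ha (mul_eq_right.mp h)

theorem IsCograph.orderOf_eq_of_prime_dvd_of_commute (hco : IsCograph (powerGraph G)) {x y : G}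
    (hxy : Commute x y) (hcop : (orderOf x).Coprime (orderOf y)) (hx : x ≠ 1)
    (hy0 : orderOf y ≠ 0) {q : ℕ} (hq : q.Prime) (hqy : q ∣ orderOf y) : orderOf y = q := by
  by_contra hne
  set v := y ^ (orderOf y / q)
  have hv : orderOf v = q := orderOf_pow_orderOf_div hy0 hqy
  have hxv : Commute x v := hxy.pow_right _
  have hcop' : (orderOf x).Coprime (orderOf v) := hv ▸ hcop.coprime_dvd_right hqy
  have hy1 : y ≠ 1 := fun h => hq.ne_one (Nat.dvd_one.mp (by rwa [h, orderOf_one] at hqy))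
  have hx_y : x ∉ zpowers y := fun h => hx (eq_one_of_mem_zpowers_of_coprime h hcop)
  have hy_xv : y ∉ zpowers (x * v) := by
    intro h
    have hdvd : orderOf y ∣ orderOf x * q := by
      rw [← hv, ← hxv.orderOf_mul_eq_mul_orderOf_of_coprime hcop']
      exact orderOf_dvd_of_mem_zpowers h
    rcases (Nat.dvd_prime hq).mp (hcop.symm.dvd_of_dvd_mul_left hdvd) with h1 | h1
    · exact hy1 (orderOf_eq_one_iff.mp h1)
    · exact hne h1
  exact hco x (x * v) v y <| inducedP4_powerGraph_mul hxv hcop' hx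
    (fun h => hq.ne_one (by rw [← hv, h, orderOf_one])) (npow_mem_zpowers y _)
    (fun h => hne (h ▸ hv)) hx_y
    (fun h => hy1 (eq_one_of_mem_zpowers_of_coprime h hcop.symm))
    (fun h => hx_y (zpowers_le.mpr h (hxv.left_mem_zpowers_mul hcop'))) hy_xv

theorem IsCograph.mem_zpowers_of_commute_of_orderOf_eq (hco : IsCograph (powerGraph G))
    {x w y : G} (hxw : Commute x w) (hxy : Commute x y) (hcop : (orderOf x).Coprime (orderOf w))
    (hyw : orderOf y = orderOf w) (hx : x ≠ 1) : y ∈ zpowers w := by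
  by_contra hy
  have hw0 : orderOf w ≠ 0 := fun h =>
    hx (orderOf_eq_one_iff.mp (Nat.coprime_zero_right _ |>.mp (h ▸ hcop)))
  have hcop' : (orderOf x).Coprime (orderOf y) := hyw ▸ hcop
  have hy1 : y ≠ 1 := fun h => hy (h ▸ one_mem _)
  have hw1 : w ≠ 1 := fun h => hy1 (orderOf_eq_one_iff.mp (by rw [hyw, h, orderOf_one]))
  have hyn : y ^ orderOf w = 1 := hyw ▸ pow_orderOf_eq_one y
  have hwn : w ^ orderOf w = 1 := pow_orderOf_eq_one w
  have hx_xy : x ∈ zpowers (x * y) := hxy.left_mem_zpowers_mul hcop'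
  have hw_xy : w ∉ zpowers (x * y) := fun h =>
    hy (mem_zpowers_of_mem_zpowers_of_orderOf_eq (hyw ▸ hw0)
      (hxy.mem_zpowers_of_mem_zpowers_mul hcop hyn h hwn) hyw.symm)
  refine hco w (w * x) x (x * y) <| inducedP4_powerGraph_mul hxw.symm hcop.symm hw1 hx hx_xy
    (fun h => hy1 (left_eq_mul.mp h)) hw_xy
    (fun h => hx (eq_one_of_mem_zpowers_of_coprime (zpowers_le.mpr h hx_xy) hcop))
    (fun h => hw_xy (zpowers_le.mpr h (hxw.symm.left_mem_zpowers_mul hcop.symm))) ?_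
  intro h
  have hy_xw : y ∈ zpowers (x * w) := hxw.eq ▸ zpowers_le.mpr h (hxy.right_mem_zpowers_mul hcop')
  exact hy (hxw.mem_zpowers_of_mem_zpowers_mul hcop hwn hy_xw hyn)

end

theorem power_of_q_in_centralizer_mem_zpowers_general
    {G : Type*} [Group G]
    (hco : IsCograph (powerGraph G))
    {p q : ℕ} (hp : p.Prime) (hq : q.Prime) (hpq : p ≠ q)
    {x w : G} (hxw : Commute x w) (hx : orderOf x = p) (hw : orderOf w = q) :
    ∀ y ∈ Subgroup.centralizer ({x} : Set G), (∃ k : ℕ, orderOf y = q ^ k) →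
      y ∈ Subgroup.zpowers w := by
  rintro y hy ⟨k, hyk⟩
  have hxy : Commute x y := (mem_centralizer_singleton_iff.mp hy).symm
  have hx1 : x ≠ 1 := fun h => hp.ne_one (by rw [← hx, h, orderOf_one])
  have hcop : p.Coprime q := (Nat.coprime_primes hp hq).mpr hpq
  rcases Nat.eq_zero_or_pos k with rfl | hk
  · rw [pow_zero, orderOf_eq_one_iff] at hyk
    exact hyk ▸ one_mem _
  have hyq : orderOf y = q :=
    hco.orderOf_eq_of_prime_dvd_of_commute hxy (by rw [hx, hyk]; exact hcop.pow_right k) hx1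
      (hyk ▸ pow_ne_zero k hq.ne_zero) hq (hyk ▸ dvd_pow_self q hk.ne')
  exact hco.mem_zpowers_of_commute_of_orderOf_eq hxw hxy (by rwa [hx, hw]) (hyq.trans hw.symm) hx1

theorem power_of_q_in_centralizer_mem_zpowers
    {G : Type*} [Group G] [Finite G]
    (hco : IsCograph (powerGraph G))
    {p q : ℕ} (hp : p.Prime) (hq : q.Prime) (hpq : p ≠ q)
    {x w : G} (hxw : Commute x w) (hx : orderOf x = p) (hw : orderOf w = q) :
    ∀ y ∈ Subgroup.centralizer ({x} : Set G), (∃ k : ℕ, orderOf y = q ^ k) →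
      y ∈ Subgroup.zpowers w :=
  power_of_q_in_centralizer_mem_zpowers_general hco hp hq hpq hxw hx hw
end

section
/- Let G be a finite group isomorphic to a semidirect product Q ⋊ C_p, where Q is a q-group for a prime q ≠ p. If the power graph of G is a cograph and G contains an element of order pq, then G ≅ C_q × C_p. -/
/-! Let `g` have order `pq`; then `c = g ^ p` lies in `Q`, of index `p`, and `h = g ^ q` has
order `p`. In a cograph power graph, if `g ^ n` is a power of `x` but `g ^ m` is not, then `x` is
a power of `g`, since otherwise `g ^ m, g, g ^ n, x` is an induced path. It suffices to show
`Q = ⟨c⟩`, for then `|G| = pq = |g|`. Otherwise the center of the `q`-group `Q` provides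
`u ∈ Q \ ⟨c⟩` commuting with `c`. As `(ugu⁻¹) ^ p = c`, either `ugu⁻¹ ∈ ⟨g⟩` or `h ∈ ⟨ugu⁻¹⟩`;
either way conjugating `h` by `u` or `u⁻¹` lands in `⟨g⟩`, hence in `⟨h⟩`, so
`[u, h] ∈ Q ∩ ⟨h⟩ = 1`. Then `h` is a power of `uh`, so `uh ∈ ⟨g⟩` or `c ∈ ⟨uh⟩`, and both
force `u ∈ ⟨g⟩ ∩ Q = ⟨c⟩`. -/

open Subgroup

section

variable {G : Type*} [Group G]

lemma orderOf_pow_of_orderOf_eq_mul {g : G} {m n : ℕ} (hg : orderOf g = m * n) (hn : n ≠ 0) :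
    orderOf (g ^ n) = m := by
  rw [orderOf_pow_of_dvd hn (hg ▸ dvd_mul_left n m), hg,
    Nat.mul_div_cancel m (Nat.pos_of_ne_zero hn)]

lemma pow_notMem_zpowers_pow {g : G} {m n : ℕ} (hm : m.Prime) (hn : n.Prime) (hmn : m ≠ n)
    (hg : orderOf g = m * n) : g ^ m ∉ zpowers (g ^ n) := by
  intro hmem
  have hdvd := orderOf_dvd_of_mem_zpowers hmem
  rw [orderOf_pow_of_orderOf_eq_mul (hg.trans (mul_comm m n)) hm.ne_zero,
    orderOf_pow_of_orderOf_eq_mul hg hn.ne_zero] at hdvd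
  exact hmn ((Nat.prime_dvd_prime_iff_eq hn hm).mp hdvd).symm

lemma IsCograph.pow_mem_zpowers_or_mem_zpowers (hco : IsCograph (powerGraph G)) {g x : G}
    {m n : ℕ} (hm : m.Prime) (hn : n.Prime) (hmn : m ≠ n) (hg : orderOf g = m * n)
    (hx : g ^ n ∈ zpowers x) : g ^ m ∈ zpowers x ∨ x ∈ zpowers g := by
  by_contra! ⟨hmx, hxg⟩
  have hgx : g ∉ zpowers x := fun h ↦ hmx (pow_mem h m)
  have hmn' := pow_notMem_zpowers_pow hm hn hmn hg
  have hnm := pow_notMem_zpowers_pow hn hm hmn.symm (hg.trans (mul_comm m n))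
  have hmg : g ^ m ∈ zpowers g := pow_mem (mem_zpowers g) m
  have hng : g ^ n ∈ zpowers g := pow_mem (mem_zpowers g) n
  refine hco (g ^ m) g (g ^ n) x ⟨fun h ↦ hmn' (h ▸ mem_zpowers _),
    fun h ↦ hmx (h ▸ mem_zpowers _), fun h ↦ hxg (h ▸ mem_zpowers _),
    ⟨fun h ↦ hnm (by rwa [h]), Or.inr hmg⟩, ⟨fun h ↦ hmn' (by rwa [← h]), Or.inl hng⟩,
    ⟨fun h ↦ hxg (by rwa [← h]), Or.inr hx⟩, ?_, ?_, ?_⟩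
  · rintro ⟨-, h | h⟩
    exacts [hnm h, hmn' h]
  · rintro ⟨-, h | h⟩
    exacts [hxg (zpowers_le.mpr hmg h), hmx h]
  · rintro ⟨-, h | h⟩
    exacts [hxg h, hgx h]

lemma mem_zpowers_pow_of_pow_eq_one {g y : G} {m n : ℕ} (hg : orderOf g = m * n) (hn : n ≠ 0)
    (hy : y ∈ zpowers g) (hyn : y ^ n = 1) : y ∈ zpowers (g ^ m) := by
  obtain ⟨k, rfl⟩ := mem_zpowers_iff.mp hy
  rw [← zpow_natCast, ← zpow_mul, ← orderOf_dvd_iff_zpow_eq_one, hg, Nat.cast_mul] at hyn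
  obtain ⟨j, rfl⟩ := (Int.mul_dvd_mul_iff_right (by exact_mod_cast hn)).mp hyn
  exact mem_zpowers_iff.mpr ⟨j, by rw [← zpow_natCast, ← zpow_mul]⟩

lemma mem_zpowers_of_mem_zpowers_of_prime [Finite G] {c z : G} (hc : (orderOf c).Prime)
    (hz : z ∈ zpowers c) (hz1 : z ≠ 1) : c ∈ zpowers z := by
  have hord : orderOf z = orderOf c :=
    ((Nat.dvd_prime hc).mp (orderOf_dvd_of_mem_zpowers hz)).resolve_left
      (fun h ↦ hz1 (orderOf_eq_one_iff.mp h))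
  rw [eq_of_le_of_card_ge (zpowers_le.mpr hz) (by rw [Nat.card_zpowers, Nat.card_zpowers, hord])]
  exact mem_zpowers c

end

lemma IsCyclic.nonempty_mulEquiv_prod {G : Type*} [Group G] [IsCyclic G] {m n : ℕ} [NeZero m]
    [NeZero n] (hmn : m.Coprime n) (hcard : Nat.card G = m * n) :
    Nonempty (G ≃* Multiplicative (ZMod m) × Multiplicative (ZMod n)) := by
  have : IsCyclic (Multiplicative (ZMod m) × Multiplicative (ZMod n)) :=
    Group.isCyclic_prod_iff.mpr ⟨inferInstance, inferInstance, by simpa using hmn⟩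
  exact ⟨mulEquivOfCyclicCardEq (by simpa using hcard)⟩

section

variable {G : Type*} [Group G] {p q : ℕ} {Q : Subgroup G} {g : G}

lemma IsPGroup.coprime_orderOf_of_mem (hQq : IsPGroup q Q) (hqp : q.Coprime p) {y : G}
    (hy : y ∈ Q) : (orderOf y).Coprime p :=
  Subgroup.orderOf_mk y hy ▸ hQq.orderOf_coprime hqp ⟨y, hy⟩

lemma IsPGroup.eq_one_of_mem_zpowers_pow (hQq : IsPGroup q Q) (hp : p.Prime) (hq : q.Prime)
    (hpq : p ≠ q) (hg : orderOf g = p * q) {y : G} (hyQ : y ∈ Q) (hy : y ∈ zpowers (g ^ q)) :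
    y = 1 := by
  have hdvd : orderOf y ∣ p := orderOf_pow_of_orderOf_eq_mul hg hq.ne_zero ▸
    orderOf_dvd_of_mem_zpowers hy
  exact orderOf_eq_one_iff.mp <|
    (hQq.coprime_orderOf_of_mem ((Nat.coprime_primes hq hp).2 hpq.symm) hyQ).eq_one_of_dvd hdvd

lemma IsPGroup.pow_notMem_of_orderOf_eq_mul (hQq : IsPGroup q Q) (hp : p.Prime)
    (hq : q.Prime) (hpq : p ≠ q) (hg : orderOf g = p * q) : g ^ q ∉ Q := fun hmem ↦ by
  have hone := hQq.eq_one_of_mem_zpowers_pow hp hq hpq hg hmem (mem_zpowers _)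
  rw [← orderOf_eq_one_iff, orderOf_pow_of_orderOf_eq_mul hg hq.ne_zero] at hone
  exact hp.ne_one hone

lemma IsPGroup.mem_zpowers_pow_of_mem_zpowers (hQq : IsPGroup q Q) (hp : p.Prime) (hq : q.Prime)
    (hpq : p ≠ q) (hg : orderOf g = p * q) {y : G} (hyQ : y ∈ Q) (hy : y ∈ zpowers g) :
    y ∈ zpowers (g ^ p) := by
  have hdvd : orderOf y ∣ q :=
    (hQq.coprime_orderOf_of_mem ((Nat.coprime_primes hq hp).2 hpq.symm) hyQ).dvd_of_dvd_mul_left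
      (hg ▸ orderOf_dvd_of_mem_zpowers hy)
  exact mem_zpowers_pow_of_pow_eq_one hg hq.ne_zero hy (orderOf_dvd_iff_pow_eq_one.mp hdvd)

lemma IsPGroup.commute_pow_of_conj_mem_zpowers [Q.Normal] (hQq : IsPGroup q Q) (hp : p.Prime)
    (hq : q.Prime) (hpq : p ≠ q) (hg : orderOf g = p * q) {v : G} (hv : v ∈ Q)
    (hconj : v * g ^ q * v⁻¹ ∈ zpowers g) : Commute v (g ^ q) := by
  have hconj_pow : (v * g ^ q * v⁻¹) ^ p = 1 := by
    rw [conj_pow, ← pow_mul, mul_comm, ← hg, pow_orderOf_eq_one, mul_one, mul_inv_cancel]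
  have hmem : v * g ^ q * v⁻¹ ∈ zpowers (g ^ q) :=
    mem_zpowers_pow_of_pow_eq_one (hg.trans (mul_comm p q)) hp.ne_zero hconj hconj_pow
  have hcomm_mem : v * g ^ q * v⁻¹ * (g ^ q)⁻¹ ∈ Q := by
    simpa only [mul_assoc] using Q.mul_mem hv (Subgroup.Normal.conj_mem ‹_› _ (Q.inv_mem hv) _)
  have hcomm_eq := hQq.eq_one_of_mem_zpowers_pow hp hq hpq hg hcomm_mem
    (mul_mem hmem (inv_mem (mem_zpowers _)))
  rwa [mul_inv_eq_one, mul_inv_eq_iff_eq_mul] at hcomm_eq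

lemma IsCograph.mem_zpowers_pow_of_pow_mem_zpowers (hco : IsCograph (powerGraph G))
    (hQq : IsPGroup q Q) (hp : p.Prime) (hq : q.Prime) (hpq : p ≠ q) (hg : orderOf g = p * q)
    {z : G} (hz : z ∈ Q) (hgz : g ^ p ∈ zpowers z) : z ∈ zpowers (g ^ p) := by
  rcases hco.pow_mem_zpowers_or_mem_zpowers hq hp hpq.symm (hg.trans (mul_comm p q)) hgz
    with hmem | hmem
  · exact absurd (zpowers_le.mpr hz hmem) (hQq.pow_notMem_of_orderOf_eq_mul hp hq hpq hg)
  · exact hQq.mem_zpowers_pow_of_mem_zpowers hp hq hpq hg hz hmem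

lemma IsCograph.mem_zpowers_pow_of_commute (hco : IsCograph (powerGraph G))
    (hQq : IsPGroup q Q) (hp : p.Prime) (hq : q.Prime) (hpq : p ≠ q) (hg : orderOf g = p * q)
    (hgQ : g ^ p ∈ Q) {u : G} (hu : u ∈ Q) (hcomm : Commute u (g ^ q)) :
    u ∈ zpowers (g ^ p) := by
  have hqp : q.Coprime p := (Nat.coprime_primes hq hp).2 hpq.symm
  obtain ⟨e, he⟩ := exists_pow_eq_self_of_coprime (x := g ^ q) (n := orderOf u)
    (by rw [orderOf_pow_of_orderOf_eq_mul hg hq.ne_zero]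
        exact hQq.coprime_orderOf_of_mem hqp hu)
  have hx : g ^ q ∈ zpowers (u * g ^ q) := by
    have hpow : (u * g ^ q) ^ orderOf u = (g ^ q) ^ orderOf u := by
      rw [hcomm.mul_pow, pow_orderOf_eq_one, one_mul]
    have hpow_mem := pow_mem (pow_mem (mem_zpowers (u * g ^ q)) (orderOf u)) e
    rwa [hpow, he] at hpow_mem
  rcases hco.pow_mem_zpowers_or_mem_zpowers hp hq hpq hg hx with hmem | hmem
  · obtain ⟨k, hk⟩ := mem_zpowers_iff.mp hmem
    rw [hcomm.mul_zpow] at hk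
    have hk_one : (g ^ q) ^ k = 1 := hQq.eq_one_of_mem_zpowers_pow hp hq hpq hg
      (by rw [eq_inv_mul_of_mul_eq hk]; exact Q.mul_mem (Q.inv_mem (Q.zpow_mem hu k)) hgQ)
      (zpow_mem (mem_zpowers _) k)
    rw [hk_one, mul_one] at hk
    exact hco.mem_zpowers_pow_of_pow_mem_zpowers hQq hp hq hpq hg hu
      (mem_zpowers_iff.mpr ⟨k, hk⟩)
  · refine hQq.mem_zpowers_pow_of_mem_zpowers hp hq hpq hg hu ?_
    simpa using mul_mem hmem (inv_mem (pow_mem (mem_zpowers g) q))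

lemma IsCograph.commute_pow_of_commute_pow [Q.Normal] (hco : IsCograph (powerGraph G))
    (hQq : IsPGroup q Q) (hp : p.Prime) (hq : q.Prime) (hpq : p ≠ q) (hg : orderOf g = p * q)
    {u : G} (hu : u ∈ Q) (hcomm : Commute u (g ^ p)) : Commute u (g ^ q) := by
  have hx : g ^ p ∈ zpowers (u * g * u⁻¹) := by
    have hconj : (u * g * u⁻¹) ^ p = g ^ p := by rw [conj_pow, hcomm.eq, mul_inv_cancel_right]
    rw [← hconj]
    exact pow_mem (mem_zpowers _) p
  rcases hco.pow_mem_zpowers_or_mem_zpowers hq hp hpq.symm (hg.trans (mul_comm p q)) hx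
    with hmem | hmem
  · obtain ⟨k, hk⟩ := mem_zpowers_iff.mp hmem
    rw [conj_zpow] at hk
    have hconj : u⁻¹ * g ^ q * u⁻¹⁻¹ = g ^ k := by
      rw [← hk]; group
    exact Commute.inv_left_iff.mp <| hQq.commute_pow_of_conj_mem_zpowers hp hq hpq hg
      (Q.inv_mem hu) (hconj ▸ zpow_mem (mem_zpowers g) k)
  · apply hQq.commute_pow_of_conj_mem_zpowers hp hq hpq hg hu
    rw [← conj_pow]
    exact pow_mem hmem q

lemma IsPGroup.exists_notMem_zpowers_commute [Finite G] [Fact q.Prime] (hQq : IsPGroup q Q)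
    {c z : G} (hc : (orderOf c).Prime) (hcQ : c ∈ Q) (hz : z ∈ Q) (hzc : z ∉ zpowers c) :
    ∃ u ∈ Q, u ∉ zpowers c ∧ Commute u c := by
  have : Nontrivial Q := ⟨⟨⟨z, hz⟩, 1, fun h ↦ hzc <| by
    rw [show z = 1 from congrArg Subtype.val h]; exact one_mem _⟩⟩
  have := hQq.center_nontrivial
  obtain ⟨ζ, hζ⟩ := exists_ne (1 : center Q)
  have hζcomm (y : G) (hy : y ∈ Q) : Commute (ζ : G) y :=
    (congrArg Subtype.val (mem_center_iff.mp ζ.2 ⟨y, hy⟩)).symm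
  by_cases hζc : (ζ : G) ∈ zpowers c
  · obtain ⟨k, hk⟩ := mem_zpowers_iff.mp <| mem_zpowers_of_mem_zpowers_of_prime hc hζc
      fun h ↦ hζ (Subtype.ext (Subtype.ext h))
    exact ⟨z, hz, hzc, hk ▸ ((hζcomm z hz).zpow_left k).symm⟩
  · exact ⟨ζ, (ζ : Q).2, hζc, hζcomm c hcQ⟩

lemma IsCograph.le_zpowers_pow [Finite G] [Q.Normal] (hco : IsCograph (powerGraph G))
    (hQq : IsPGroup q Q) (hp : p.Prime) (hq : q.Prime) (hpq : p ≠ q) (hg : orderOf g = p * q)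
    (hgQ : g ^ p ∈ Q) : Q ≤ zpowers (g ^ p) := by
  have : Fact q.Prime := ⟨hq⟩
  intro z hz
  by_contra hzc
  obtain ⟨u, hu, huc, hcomm⟩ := hQq.exists_notMem_zpowers_commute
    (by rwa [orderOf_pow_of_orderOf_eq_mul (hg.trans (mul_comm p q)) hp.ne_zero]) hgQ hz hzc
  exact huc <| hco.mem_zpowers_pow_of_commute hQq hp hq hpq hg hgQ hu <|
    hco.commute_pow_of_commute_pow hQq hp hq hpq hg hu hcomm

end

theorem semidirect_qgroup_cp_is_cq_times_cp
    {G : Type*} [Group G] [Finite G]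
    {p q : ℕ} (hp : p.Prime) (hq : q.Prime) (hpq : p ≠ q)
    (Q H : Subgroup G) (hQn : Q.Normal) (hQq : IsPGroup q Q)
    (hH : Nat.card H = p) (hcompl : Subgroup.IsComplement' Q H)
    (hco : IsCograph (powerGraph G))
    (hel : ∃ g : G, orderOf g = p * q) :
    Nonempty (G ≃* Multiplicative (ZMod q) × Multiplicative (ZMod p)) := by
  obtain ⟨g, hg⟩ := hel
  have hgQ : g ^ p ∈ Q := by
    simpa only [hcompl.symm.index_eq_card, hH] using Q.pow_index_mem g
  have hQ : Q = zpowers (g ^ p) := le_antisymm (hco.le_zpowers_pow hQq hp hq hpq hg hgQ)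
    (zpowers_le.mpr hgQ)
  have hcard : Nat.card G = q * p := by
    rw [← hcompl.card_mul_card, hH, hQ, Nat.card_zpowers,
      orderOf_pow_of_orderOf_eq_mul (hg.trans (mul_comm p q)) hp.ne_zero]
  have : IsCyclic G := isCyclic_of_orderOf_eq_card g (by rw [hg, hcard, mul_comm])
  have : NeZero p := ⟨hp.ne_zero⟩
  have : NeZero q := ⟨hq.ne_zero⟩
  exact IsCyclic.nonempty_mulEquiv_prod ((Nat.coprime_primes hq hp).2 hpq.symm) hcard
end

section
/- Let q be an odd prime power with q > 3 such that both q − 1 and q + 1 are each either a prime power or a product of two distinct primes, and such that q + 1 ≡ 0 mod 4 or q − 1 ≡ 0 mod 4 forces one of them to be a power of 2 and the other to be twice an odd prime. Then q ∈ {5, 7, 9}. -/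
/-- If `p = 2^b + 1` or `p + 1 = 2^b` with `b ≥ 1`, then `2^(b+1) ∣ p^(2m) - 1`. -/
lemma pgl2_aux_dvd (p b m : ℕ) (hb : 1 ≤ b) (h : p = 2 ^ b + 1 ∨ p + 1 = 2 ^ b) :
    2 ^ (b + 1) ∣ p ^ (2 * m) - 1 := by
  have key : 2 ^ (b + 1) ∣ p ^ 2 - 1 := by
    obtain ⟨b', rfl⟩ := Nat.exists_eq_add_of_le hb
    have h4 : (2 : ℕ) ^ (1 + b' + 1) = 4 * 2 ^ b' := by
      rw [pow_add, pow_add]; ring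
    rcases h with h | h
    · -- p = 2 * 2^b' + 1
      have hp' : p = 2 * 2 ^ b' + 1 := by
        rw [h, pow_add]; ring
      refine ⟨2 ^ b' + 1, ?_⟩
      have e : p ^ 2 = (4 * 2 ^ b') * (2 ^ b' + 1) + 1 := by rw [hp']; ring
      rw [h4, e]; simp
    · -- p + 1 = 2 * 2^b'
      have hp' : p + 1 = 2 * 2 ^ b' := by
        rw [h, pow_add]; ring
      have h1 : (1 : ℕ) ≤ 2 ^ b' := Nat.one_le_two_pow
      obtain ⟨Z, hZ⟩ : ∃ Z, 2 ^ b' = Z + 1 := ⟨2 ^ b' - 1, by omega⟩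
      have hpZ : p = 2 * Z + 1 := by omega
      refine ⟨Z, ?_⟩
      have e : p ^ 2 = (4 * 2 ^ b') * Z + 1 := by rw [hpZ, hZ]; ring
      rw [h4, e]; simp
  have h2 : p ^ 2 - 1 ∣ p ^ (2 * m) - 1 := by
    have := Nat.sub_dvd_pow_sub_pow (p ^ 2) 1 m
    rwa [one_pow, ← pow_mul] at this
  exact key.trans h2

lemma pgl2_caseA_odd (p a b m : ℕ) (hb : 1 ≤ b) (hm : 1 ≤ m) (hp1 : 1 < p)
    (hpb : p = 2 ^ b + 1) (h : p ^ (2 * m + 1) - 1 = 2 ^ a) : False := by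
  have hd : 2 ^ (b + 1) ∣ p ^ (2 * m) - 1 := pgl2_aux_dvd p b m hb (Or.inl hpb)
  have hple : p ≤ p ^ (2 * m + 1) := Nat.le_self_pow (by omega) p
  have h1le : 1 ≤ p ^ (2 * m) := Nat.one_le_pow _ _ (by omega)
  have hd2 : 2 ^ (b + 1) ∣ p ^ (2 * m + 1) - p := by
    have e : p ^ (2 * m + 1) - p = p * (p ^ (2 * m) - 1) := by
      rw [Nat.mul_sub, mul_one, ← pow_succ']
    rw [e]; exact hd.mul_left p
  by_cases hab : b + 1 ≤ a
  · have hdvd_a : 2 ^ (b + 1) ∣ p ^ (2 * m + 1) - 1 := by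
      rw [h]; exact pow_dvd_pow 2 hab
    have hfin : 2 ^ (b + 1) ∣ p - 1 := by
      have hsub := Nat.dvd_sub hdvd_a hd2
      have e : (p ^ (2 * m + 1) - 1) - (p ^ (2 * m + 1) - p) = p - 1 := by omega
      rwa [e] at hsub
    have hle := Nat.le_of_dvd (by omega) hfin
    have hlt : (2 : ℕ) ^ b < 2 ^ (b + 1) := Nat.pow_lt_pow_right one_lt_two (Nat.lt_succ_self b)
    omega
  · have h1 : (2 : ℕ) ^ a ≤ 2 ^ b := Nat.pow_le_pow_right (by norm_num) (by omega)
    have h2 : p ^ 1 < p ^ (2 * m + 1) := Nat.pow_lt_pow_right hp1 (by omega)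
    rw [pow_one] at h2
    omega

lemma pgl2_caseB_odd (p a b m : ℕ) (hb : 1 ≤ b) (hm : 1 ≤ m) (hp1 : 1 < p)
    (hpb : p + 1 = 2 ^ b) (h : p ^ (2 * m + 1) + 1 = 2 ^ a) : False := by
  have hd : 2 ^ (b + 1) ∣ p ^ (2 * m) - 1 := pgl2_aux_dvd p b m hb (Or.inr hpb)
  have hple : p ≤ p ^ (2 * m + 1) := Nat.le_self_pow (by omega) p
  have h1le : 1 ≤ p ^ (2 * m) := Nat.one_le_pow _ _ (by omega)
  have hd2 : 2 ^ (b + 1) ∣ p ^ (2 * m + 1) - p := by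
    have e : p ^ (2 * m + 1) - p = p * (p ^ (2 * m) - 1) := by
      rw [Nat.mul_sub, mul_one, ← pow_succ']
    rw [e]; exact hd.mul_left p
  by_cases hab : b + 1 ≤ a
  · have hdvd_a : 2 ^ (b + 1) ∣ p ^ (2 * m + 1) + 1 := by
      rw [h]; exact pow_dvd_pow 2 hab
    have hfin : 2 ^ (b + 1) ∣ p + 1 := by
      have hsub := Nat.dvd_sub hdvd_a hd2
      have e : (p ^ (2 * m + 1) + 1) - (p ^ (2 * m + 1) - p) = p + 1 := by omega
      rwa [e] at hsub
    have hle := Nat.le_of_dvd (by omega) hfin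
    have hlt : (2 : ℕ) ^ b < 2 ^ (b + 1) := Nat.pow_lt_pow_right one_lt_two (Nat.lt_succ_self b)
    omega
  · have h1 : (2 : ℕ) ^ a ≤ 2 ^ b := Nat.pow_le_pow_right (by norm_num) (by omega)
    have h2 : p ^ 1 < p ^ (2 * m + 1) := Nat.pow_lt_pow_right hp1 (by omega)
    rw [pow_one] at h2
    omega

theorem pgl2_number_theory
    (q : ℕ) (hq3 : 3 < q)
    (hodd : Odd q)
    (hpp : ∃ (p k : ℕ), p.Prime ∧ Odd p ∧ q = p ^ k)
    (hqm : (∃ (r : ℕ) (k : ℕ), r.Prime ∧ q - 1 = r ^ k) ∨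
           (∃ r s : ℕ, r.Prime ∧ s.Prime ∧ r ≠ s ∧ q - 1 = r * s))
    (hqp : (∃ (r : ℕ) (k : ℕ), r.Prime ∧ q + 1 = r ^ k) ∨
           (∃ r s : ℕ, r.Prime ∧ s.Prime ∧ r ≠ s ∧ q + 1 = r * s))
    (hstruct :
      ((∃ a : ℕ, q - 1 = 2 ^ a) ∧ (∃ r : ℕ, r.Prime ∧ Odd r ∧ q + 1 = 2 * r)) ∨
      ((∃ a : ℕ, q + 1 = 2 ^ a) ∧ (∃ r : ℕ, r.Prime ∧ Odd r ∧ q - 1 = 2 * r))) :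
    q = 5 ∨ q = 7 ∨ q = 9 := by
  obtain ⟨p, k, hp, hpodd, rfl⟩ := hpp
  have hp2 : 2 ≤ p := hp.two_le
  have hp3 : 3 ≤ p := by
    rcases hpodd with ⟨t, ht⟩; omega
  have hk0 : k ≠ 0 := by
    rintro rfl; simp at hq3
  have hq5 : 5 ≤ p ^ k := by
    rcases hodd with ⟨t, ht⟩; omega
  rcases hstruct with ⟨⟨a, ha⟩, r, hr, hrodd, hqr⟩ | ⟨⟨a, ha⟩, r, hr, hrodd, hqr⟩
  · -- q - 1 = 2^a, q + 1 = 2r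
    have ha2 : 2 ≤ a := by
      by_contra hcon
      interval_cases a <;> omega
    rcases Nat.even_or_odd k with hke | hko
    · -- k even : q = 9
      obtain ⟨m, rfl⟩ : ∃ m, k = 2 * m := even_iff_exists_two_mul.mp hke
      have hm1 : 1 ≤ m := by omega
      have hxodd : Odd (p ^ m) := hpodd.pow
      have hx3 : 3 ≤ p ^ m := le_trans hp3 (Nat.le_self_pow (by omega) p)
      obtain ⟨y, hy⟩ := hxodd
      have hy1 : 1 ≤ y := by omega
      have hx : (p ^ m) ^ 2 - 1 = 2 ^ a := by
        rw [← pow_mul, mul_comm m 2]; exact ha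
      have hprod : (2 * y) * (2 * y + 2) = 2 ^ a := by
        have e : (2 * y + 1) ^ 2 = (2 * y) * (2 * y + 2) + 1 := by ring
        rw [hy, e] at hx
        omega
      obtain ⟨i, hia, hi⟩ := (Nat.dvd_prime_pow Nat.prime_two).mp ⟨2 * y + 2, hprod.symm⟩
      obtain ⟨j, hja, hj⟩ := (Nat.dvd_prime_pow Nat.prime_two).mp
        (⟨2 * y, by rw [← hprod]; ring⟩ : (2 * y + 2 : ℕ) ∣ 2 ^ a)
      have hj2 : 2 ≤ j := by
        by_contra hcon
        interval_cases j <;> omega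
      obtain ⟨j', rfl⟩ : ∃ j', j = j' + 2 := ⟨j - 2, by omega⟩
      have hj4 : (2 : ℕ) ^ (j' + 2) = 4 * 2 ^ j' := by ring
      have hi1 : i = 1 := by
        by_contra hcon
        have hi2 : 2 ≤ i := by
          have : i ≠ 0 := by rintro rfl; rw [pow_zero] at hi; omega
          omega
        obtain ⟨i', rfl⟩ : ∃ i', i = i' + 2 := ⟨i - 2, by omega⟩
        have hi4 : (2 : ℕ) ^ (i' + 2) = 4 * 2 ^ i' := by ring
        omega
      have hy1' : y = 1 := by rw [hi1] at hi; omega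
      have hx3' : p ^ m = 3 := by omega
      have hple : p ≤ p ^ m := Nat.le_self_pow (by omega) p
      have hpeq : p = 3 := by omega
      have hmeq : m = 1 := by
        have : p ^ m = p ^ 1 := by rw [hx3', hpeq, pow_one]
        exact Nat.pow_right_injective hp2 this
      right; right
      rw [hpeq, hmeq]; norm_num
    · -- k odd
      obtain ⟨m, rfl⟩ := hko
      have hdvd : p - 1 ∣ 2 ^ a := by
        have := Nat.sub_dvd_pow_sub_pow p 1 (2 * m + 1)
        rw [one_pow, ha] at this
        exact this
      obtain ⟨b, hba, hb⟩ := (Nat.dvd_prime_pow Nat.prime_two).mp hdvd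
      have hb1 : 1 ≤ b := by
        by_contra hcon
        interval_cases b <;> omega
      have hpb : p = 2 ^ b + 1 := by omega
      rcases Nat.eq_zero_or_pos m with rfl | hm1
      · -- k = 1 : q = p = 2^a + 1
        simp only [mul_zero, zero_add, pow_one] at ha hqr ⊢
        have hP : (2 ^ a + 1).Prime := by
          have : p = 2 ^ a + 1 := by omega
          rwa [this] at hp
        have hR : (2 ^ (a - 1) + 1).Prime := by
          have h2a : (2 : ℕ) ^ a = 2 * 2 ^ (a - 1) := by
            conv_lhs => rw [show a = (a - 1) + 1 by omega]
            rw [pow_succ]; ring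
          have : r = 2 ^ (a - 1) + 1 := by omega
          rwa [this] at hr
        obtain ⟨m1, hm1⟩ := Nat.pow_of_pow_add_prime one_lt_two (by omega) hP
        obtain ⟨m2, hm2⟩ := Nat.pow_of_pow_add_prime one_lt_two (by omega : a - 1 ≠ 0) hR
        have ha2' : a = 2 := by
          rcases Nat.eq_zero_or_pos m2 with rfl | hm2pos
          · rw [pow_zero] at hm2; omega
          · exfalso
            obtain ⟨m2', rfl⟩ : ∃ m2', m2 = m2' + 1 := ⟨m2 - 1, by omega⟩
            have e2 : (2 : ℕ) ^ (m2' + 1) = 2 * 2 ^ m2' := by ring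
            have h2' : 1 ≤ (2 : ℕ) ^ m2' := Nat.one_le_two_pow
            rcases Nat.eq_zero_or_pos m1 with rfl | hm1pos
            · simp at hm1; omega
            · obtain ⟨m1', rfl⟩ : ∃ m1', m1 = m1' + 1 := ⟨m1 - 1, by omega⟩
              have e1 : (2 : ℕ) ^ (m1' + 1) = 2 * 2 ^ m1' := by ring
              omega
        rw [ha2'] at ha
        norm_num at ha
        left; omega
      · exact absurd ha (fun h => pgl2_caseA_odd p a b m hb1 hm1 (by omega) hpb h)
  · -- q + 1 = 2^a, q - 1 = 2r
    have ha3 : 3 ≤ a := by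
      by_contra hcon
      interval_cases a <;> omega
    have h4dvd : (4 : ℕ) ∣ 2 ^ a := by
      obtain ⟨a', rfl⟩ : ∃ a', a = a' + 2 := ⟨a - 2, by omega⟩
      exact ⟨2 ^ a', by ring⟩
    rcases Nat.even_or_odd k with hke | hko
    · -- k even : impossible mod 4
      exfalso
      obtain ⟨m, rfl⟩ : ∃ m, k = 2 * m := even_iff_exists_two_mul.mp hke
      have hxodd : Odd (p ^ m) := hpodd.pow
      obtain ⟨y, hy⟩ := hxodd
      have hx : (p ^ m) ^ 2 + 1 = 2 ^ a := by
        rw [← pow_mul, mul_comm m 2]; exact ha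
      have e : (2 * y + 1) ^ 2 = 4 * (y * y) + 4 * y + 1 := by ring
      rw [hy, e] at hx
      obtain ⟨c, hc⟩ := h4dvd
      omega
    · -- k odd
      obtain ⟨m, rfl⟩ := hko
      have hdvd : p + 1 ∣ 2 ^ a := by
        have := Odd.nat_add_dvd_pow_add_pow p 1 (⟨m, by ring⟩ : Odd (2 * m + 1))
        rw [one_pow, ha] at this
        exact this
      obtain ⟨b, hba, hb⟩ := (Nat.dvd_prime_pow Nat.prime_two).mp hdvd
      have hb2 : 2 ≤ b := by
        by_contra hcon
        interval_cases b <;> omega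
      rcases Nat.eq_zero_or_pos m with rfl | hm1
      · -- k = 1 : q = p = 2^a - 1
        simp only [mul_zero, zero_add, pow_one] at ha hqr ⊢
        have hP : (2 ^ a - 1).Prime := by
          have : p = 2 ^ a - 1 := by omega
          rwa [this] at hp
        have h2a : (2 : ℕ) ^ a = 2 * 2 ^ (a - 1) := by
          conv_lhs => rw [show a = (a - 1) + 1 by omega]
          rw [pow_succ]; ring
        have hR : (2 ^ (a - 1) - 1).Prime := by
          have : r = 2 ^ (a - 1) - 1 := by omega
          rwa [this] at hr
        have haP : a.Prime := (Nat.prime_of_pow_sub_one_prime (by omega) hP).2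
        have haP' : (a - 1).Prime := (Nat.prime_of_pow_sub_one_prime (by omega) hR).2
        have ha3' : a = 3 := by
          rcases Nat.even_or_odd a with he | ho
          · have := haP.even_iff.mp he; omega
          · have he' : Even (a - 1) := by
              obtain ⟨t, ht⟩ := ho; exact ⟨t, by omega⟩
            have := haP'.even_iff.mp he'; omega
        rw [ha3'] at ha
        norm_num at ha
        right; left; omega
      · exact absurd ha (fun h => pgl2_caseB_odd p a b m (by omega) hm1 (by omega) hb h)
end
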